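/- arXiv:1910.02573 — 2 statements merged into one kernel-verified Lean document; each statement's English description precedes it below -/
import Mathlib

section
/- The set Y = {(x,u,z) ∈ ℝⁿ×ℝⁿ×ℝᵖ : (u,z) ∈ K, u majorizes x, u₁ ≥ u₂ ≥ ... ≥ uₙ} is convex whenever K ⊆ ℝⁿ×ℝᵖ is convex. -/
open Finset

/-- The `i`-th largest entry (0-indexed) of the tuple `x`. -/
noncomputable def sortedDesc (n : ℕ) (x : Fin n → ℝ) : Fin n → ℝ :=
  fun i => x (Tuple.sort x i.rev)

/-- Sum of the `k` largest entries of `x`. -/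
noncomputable def topSum (n : ℕ) (x : Fin n → ℝ) (k : ℕ) : ℝ :=
  ∑ i ∈ Finset.univ.filter (fun i : Fin n => (i : ℕ) < k), sortedDesc n x i

/-- `u` majorizes `x`. -/
def Majorizes (n : ℕ) (u x : Fin n → ℝ) : Prop :=
  (∀ k, k < n → topSum n x k ≤ topSum n u k) ∧ (∑ i, x i = ∑ i, u i)

/-- `u` weakly submajorizes `x`. -/
def WeakSubmajorizes (n : ℕ) (u x : Fin n → ℝ) : Prop :=
  ∀ k, k ≤ n → topSum n x k ≤ topSum n u k

/-- Number of nonzero components. -/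
noncomputable def suppCard (n : ℕ) (x : Fin n → ℝ) : ℕ :=
  (Finset.univ.filter (fun i => x i ≠ 0)).card

lemma card_filter_lt_fin (n k : ℕ) (hk : k ≤ n) :
    (Finset.univ.filter (fun i : Fin n => (i : ℕ) < k)).card = k := by
  have : (Finset.univ.filter (fun i : Fin n => (i : ℕ) < k)) =
      (Finset.univ : Finset (Fin k)).map (Fin.castLEEmb hk) := by
    ext i
    simp only [mem_filter, mem_univ, true_and, Finset.mem_map]
    constructor
    · intro h; exact ⟨⟨i, h⟩, by simp [Fin.castLEEmb, Fin.ext_iff]⟩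
    · rintro ⟨j, -, rfl⟩; simp
  rw [this, Finset.card_map, Finset.card_univ, Fintype.card_fin]

lemma sortedDesc_antitone (n : ℕ) (x : Fin n → ℝ) : Antitone (sortedDesc n x) := by
  intro i j hij
  exact Tuple.monotone_sort x (Fin.rev_le_rev.mpr hij)

lemma sortedDesc_of_antitone (n : ℕ) (u : Fin n → ℝ) (hu : Antitone u) :
    sortedDesc n u = u := by
  have hmono : Monotone (u ∘ (Fin.revPerm : Equiv.Perm (Fin n))) := by
    intro i j hij
    exact hu (Fin.rev_le_rev.mpr hij)
  have h := (Tuple.comp_sort_eq_comp_iff_monotone (σ := (Fin.revPerm : Equiv.Perm (Fin n)))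
    (f := u)).mpr hmono
  funext i
  have := congrFun h.symm i.rev
  simpa [sortedDesc] using this

/-- For antitone `u`, `topSum` is just the sum of the first `k` entries. -/
lemma topSum_of_antitone (n : ℕ) (u : Fin n → ℝ) (hu : Antitone u) (k : ℕ) :
    topSum n u k = ∑ i ∈ Finset.univ.filter (fun i : Fin n => (i : ℕ) < k), u i := by
  simp [topSum, sortedDesc_of_antitone n u hu]

/-- Comparison of sums over equal-card sets when all values on `A` are below all on `B`. -/
lemma sum_le_sum_of_pairwise (z : Fin n → ℝ) (A B : Finset (Fin n)) (hcard : A.card = B.card)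
    (h : ∀ a ∈ A, ∀ b ∈ B, z a ≤ z b) : ∑ i ∈ A, z i ≤ ∑ i ∈ B, z i := by
  rcases A.eq_empty_or_nonempty with rfl | hA
  · have : B = ∅ := by
      rw [← Finset.card_eq_zero, ← hcard]; simp
    simp [this]
  · obtain ⟨a₀, ha₀, hsup⟩ := Finset.exists_mem_eq_sup' hA z
    calc ∑ i ∈ A, z i ≤ A.card • (z a₀) := by
          apply Finset.sum_le_card_nsmul
          intro a ha
          rw [← hsup]
          exact Finset.le_sup' z ha
      _ = B.card • (z a₀) := by rw [hcard]
      _ ≤ ∑ i ∈ B, z i := by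
          apply Finset.card_nsmul_le_sum
          intro b hb
          exact h a₀ ha₀ b hb

/-- For antitone `z`, any `k` entries sum to at most the first `k`. -/
lemma sum_antitone_le (z : Fin n → ℝ) (hz : Antitone z) (S : Finset (Fin n)) :
    ∑ i ∈ S, z i ≤ ∑ i ∈ Finset.univ.filter (fun i : Fin n => (i : ℕ) < S.card), z i := by
  set k := S.card with hk
  set I := Finset.univ.filter (fun i : Fin n => (i : ℕ) < k) with hI
  have hScard : (S \ I).card = (I \ S).card := by
    have h1 : (S \ I).card + (S ∩ I).card = k := Finset.card_sdiff_add_card_inter S I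
    have hIcard : I.card = k := card_filter_lt_fin n k (hk ▸ (Finset.card_le_univ S).trans
      (by simp))
    have h2 : (I \ S).card + (I ∩ S).card = I.card := Finset.card_sdiff_add_card_inter I S
    have h3 : (S ∩ I).card = (I ∩ S).card := by rw [Finset.inter_comm]
    omega
  have hsplit1 : ∑ i ∈ S, z i = ∑ i ∈ S ∩ I, z i + ∑ i ∈ S \ I, z i := by
    rw [Finset.sum_inter_add_sum_sdiff]
  have hsplit2 : ∑ i ∈ I, z i = ∑ i ∈ I ∩ S, z i + ∑ i ∈ I \ S, z i := by
    rw [Finset.sum_inter_add_sum_sdiff]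
  rw [hsplit1, hsplit2, Finset.inter_comm]
  apply add_le_add le_rfl
  apply sum_le_sum_of_pairwise z _ _ hScard
  intro a ha b hb
  apply hz
  have hak : k ≤ (a : ℕ) := by
    have := Finset.mem_sdiff.mp ha
    have := this.2
    simp only [hI, mem_filter, mem_univ, true_and] at this
    omega
  have hbk : (b : ℕ) < k := by
    have := (Finset.mem_sdiff.mp hb).1
    simp only [hI, mem_filter, mem_univ, true_and] at this
    exact this
  exact Fin.le_def.mpr (by omega)

/-- Any `k`-element sum is at most `topSum k`. -/
lemma sum_le_topSum (n : ℕ) (x : Fin n → ℝ) (S : Finset (Fin n)) :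
    ∑ i ∈ S, x i ≤ topSum n x S.card := by
  classical
  set φ : Fin n ≃ Fin n := (Fin.revPerm : Equiv.Perm (Fin n)).trans (Tuple.sort x) with hφ
  have hφ_apply : ∀ j, sortedDesc n x j = x (φ j) := by
    intro j; simp [sortedDesc, hφ]
  set S' := S.image φ.symm with hS'
  have hcard : S'.card = S.card := Finset.card_image_of_injective S φ.symm.injective
  have hsum : ∑ i ∈ S, x i = ∑ j ∈ S', sortedDesc n x j := by
    rw [hS', Finset.sum_image (fun a _ b _ h => φ.symm.injective h)]
    apply Finset.sum_congr rfl
    intro i _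
    rw [hφ_apply, Equiv.apply_symm_apply]
  rw [hsum, ← hcard]
  exact sum_antitone_le (sortedDesc n x) (sortedDesc_antitone n x) S'

/-- `topSum` is a convex function of `x` (for convex combinations). -/
lemma topSum_convex_comb (n : ℕ) (x y : Fin n → ℝ) (k : ℕ) (a b : ℝ)
    (ha : 0 ≤ a) (hb : 0 ≤ b) :
    topSum n (a • x + b • y) k ≤ a * topSum n x k + b * topSum n y k := by
  classical
  set w := a • x + b • y with hw
  -- topSum of w is a sum over a specific set T
  set φ : Fin n ≃ Fin n := (Fin.revPerm : Equiv.Perm (Fin n)).trans (Tuple.sort w) with hφ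
  set I := Finset.univ.filter (fun i : Fin n => (i : ℕ) < k) with hI
  set T := I.image φ with hT
  have hcardT : T.card = I.card := Finset.card_image_of_injective I φ.injective
  have h1 : topSum n w k = ∑ i ∈ T, w i := by
    rw [hT, Finset.sum_image (fun p _ q _ h => φ.injective h)]
    apply Finset.sum_congr rfl
    intro i _
    simp [sortedDesc, hφ]
  -- the filter condition < k equals < min k n, and I.card = min k n
  have hIcard : I.card = min k n := by
    have : I = Finset.univ.filter (fun i : Fin n => (i : ℕ) < min k n) := by
      ext i
      simp only [hI, mem_filter, mem_univ, true_and]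
      omega
    rw [this, card_filter_lt_fin n (min k n) (min_le_right k n)]
  have htop_eq : ∀ v : Fin n → ℝ, topSum n v k = topSum n v (min k n) := by
    intro v
    unfold topSum
    apply Finset.sum_congr
    · ext i
      simp only [mem_filter, mem_univ, true_and]
      omega
    · intros; rfl
  have h2 : ∑ i ∈ T, w i = a * ∑ i ∈ T, x i + b * ∑ i ∈ T, y i := by
    simp only [hw, Pi.add_apply, Pi.smul_apply, smul_eq_mul, Finset.sum_add_distrib,
      Finset.mul_sum]
  have hx : ∑ i ∈ T, x i ≤ topSum n x k := by
    rw [htop_eq x]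
    have := sum_le_topSum n x T
    rwa [hcardT, hIcard] at this
  have hy : ∑ i ∈ T, y i ≤ topSum n y k := by
    rw [htop_eq y]
    have := sum_le_topSum n y T
    rwa [hcardT, hIcard] at this
  rw [h1, h2]
  gcongr

theorem majorization_lift_convex (n p : ℕ) (K : Set ((Fin n → ℝ) × (Fin p → ℝ)))
    (hK : Convex ℝ K) :
    Convex ℝ {t : (Fin n → ℝ) × (Fin n → ℝ) × (Fin p → ℝ) |
      (t.2.1, t.2.2) ∈ K ∧ Majorizes n t.2.1 t.1 ∧ Antitone t.2.1} := by
  rintro ⟨x, u, z⟩ ⟨hKu, ⟨hmajT, hmajS⟩, hantu⟩ ⟨x', u', z'⟩ ⟨hKu', ⟨hmajT', hmajS'⟩, hantu'⟩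
    a b ha hb hab
  simp only [Prod.smul_mk, Prod.mk_add_mk, Set.mem_setOf_eq]
  refine ⟨?_, ⟨?_, ?_⟩, ?_⟩
  · -- membership in K
    exact hK hKu hKu' ha hb hab
  · -- top-sum inequalities
    intro k hk
    have hcomb : topSum n (a • x + b • x') k ≤ a * topSum n x k + b * topSum n x' k :=
      topSum_convex_comb n x x' k a b ha hb
    have hu_ant : Antitone (a • u + b • u') := by
      intro i j hij
      simp only [Pi.add_apply, Pi.smul_apply, smul_eq_mul]
      gcongr
      · exact hantu hij
      · exact hantu' hij
    have hlin : topSum n (a • u + b • u') k =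
        a * topSum n u k + b * topSum n u' k := by
      rw [topSum_of_antitone n _ hu_ant, topSum_of_antitone n u hantu,
        topSum_of_antitone n u' hantu']
      simp only [Pi.add_apply, Pi.smul_apply, smul_eq_mul, Finset.sum_add_distrib,
        Finset.mul_sum]
    calc topSum n (a • x + b • x') k
        ≤ a * topSum n x k + b * topSum n x' k := hcomb
      _ ≤ a * topSum n u k + b * topSum n u' k := by
          gcongr
          · exact hmajT k hk
          · exact hmajT' k hk
      _ = topSum n (a • u + b • u') k := hlin.symm
  · -- total sums equal
    simp only [Pi.add_apply, Pi.smul_apply, smul_eq_mul, Finset.sum_add_distrib,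
      ← Finset.mul_sum]
    rw [hmajS, hmajS']
  · -- antitone
    intro i j hij
    simp only [Pi.add_apply, Pi.smul_apply, smul_eq_mul]
    gcongr
    · exact hantu hij
    · exact hantu' hij
end

section
/- If x majorizes y in ℝⁿ, then f(x) ≥ f(y) for every permutation-invariant norm f on ℝⁿ. -/
open Finset

/-! By Abel summation, the majorization inequalities say that `c ⬝ᵥ y ≤ c ⬝ᵥ x↓` whenever the
weights `c` are sorted decreasingly (`x↓` being `x` sorted decreasingly); together with the
rearrangement inequality this gives, for every `c`, a permutation `σ` with
`c ⬝ᵥ y ≤ c ⬝ᵥ (x ∘ σ)`. By the separation theorem `y` therefore lies in the convex hull of the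
permutations of `x`. A permutation-invariant norm is a convex function taking the value `f x` at
each of these points, so it is at most `f x` on their convex hull. -/

section SummationByParts

variable {R : Type*} [CommRing R] [LinearOrder R] [IsStrictOrderedRing R]

theorem sum_range_mul_le_of_sum_range_le {d a b : ℕ → R} {n : ℕ}
    (hd : ∀ i, i + 1 < n → d (i + 1) ≤ d i)
    (hle : ∀ k < n, ∑ i ∈ range k, a i ≤ ∑ i ∈ range k, b i)
    (heq : ∑ i ∈ range n, a i = ∑ i ∈ range n, b i) :
    ∑ i ∈ range n, d i * a i ≤ ∑ i ∈ range n, d i * b i := by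
  have ha := sum_range_by_parts d a n
  have hb := sum_range_by_parts d b n
  simp only [smul_eq_mul] at ha hb
  rw [ha, hb, heq, sub_le_sub_iff_left]
  refine sum_le_sum fun i hi => mul_le_mul_of_nonpos_left ?_ ?_
  · exact hle _ (by grind)
  · exact sub_nonpos.2 (hd i (by grind))

theorem sum_filter_val_lt_eq_sum_range {M : Type*} [AddCommMonoid M] {n k : ℕ}
    (g : Fin n → M) (hk : k ≤ n) :
    ∑ i ∈ univ.filter (fun i : Fin n => (i : ℕ) < k), g i
      = ∑ i ∈ range k, Function.extend Fin.val g 0 i := by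
  have hrange : range k = (range n).filter (· < k) := by
    ext; simp only [mem_range, mem_filter, iff_and_self]; omega
  rw [hrange, sum_filter, sum_filter, ← Fin.sum_univ_eq_sum_range]
  simp only [Fin.val_injective.extend_apply]

theorem sum_mul_le_of_sum_filter_le {n : ℕ} {d a b : Fin n → R} (hd : Antitone d)
    (hle : ∀ k < n, ∑ i ∈ univ.filter (fun i : Fin n => (i : ℕ) < k), a i
      ≤ ∑ i ∈ univ.filter (fun i : Fin n => (i : ℕ) < k), b i)
    (heq : ∑ i, a i = ∑ i, b i) :
    ∑ i, d i * a i ≤ ∑ i, d i * b i := by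
  set E : (Fin n → R) → ℕ → R := fun g => Function.extend Fin.val g 0
  have hmul (g : Fin n → R) : ∑ i, d i * g i = ∑ i ∈ range n, E d i * E g i := by
    rw [← Fin.sum_univ_eq_sum_range (fun m => E d m * E g m)]
    simp only [E, Fin.val_injective.extend_apply]
  rw [hmul, hmul]
  refine sum_range_mul_le_of_sum_range_le (fun i hi => ?_) (fun k hk => ?_) ?_
  · have h₁ := Fin.val_injective.extend_apply d 0 ⟨i + 1, hi⟩
    have h₀ := Fin.val_injective.extend_apply d 0 ⟨i, by omega⟩
    simp only [E, h₀, h₁]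
    exact hd (Fin.mk_le_mk.2 i.le_succ)
  · simpa only [sum_filter_val_lt_eq_sum_range _ hk.le] using hle k hk
  · have hfull (g : Fin n → R) : ∑ i, g i = ∑ i ∈ range n, E g i := by
      simpa using sum_filter_val_lt_eq_sum_range g le_rfl
    rwa [hfull, hfull] at heq

end SummationByParts

section Sorting

variable {n : ℕ}

noncomputable def sortedDescPerm (x : Fin n → ℝ) : Equiv.Perm (Fin n) :=
  Fin.revPerm.trans (Tuple.sort x)

theorem sortedDesc_eq_comp (x : Fin n → ℝ) : sortedDesc n x = x ∘ sortedDescPerm x := rfl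

theorem antitone_sortedDesc (x : Fin n → ℝ) : Antitone (sortedDesc n x) :=
  fun _ _ hij => Tuple.monotone_sort x (Fin.rev_le_rev.2 hij)

theorem sum_sortedDesc (x : Fin n → ℝ) : ∑ i, sortedDesc n x i = ∑ i, x i :=
  Equiv.sum_comp (sortedDescPerm x) x

theorem sum_mul_le_sum_sortedDesc_mul (c y : Fin n → ℝ) :
    ∑ i, c i * y i ≤ ∑ i, sortedDesc n c i * sortedDesc n y i := by
  set τ := (sortedDescPerm c).trans (sortedDescPerm y).symm
  have hmono := (antitone_sortedDesc c).monovary (antitone_sortedDesc y)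
  calc ∑ i, c i * y i
      = ∑ i, sortedDesc n c i * sortedDesc n y (τ i) := by
        rw [← Equiv.sum_comp (sortedDescPerm c)]
        simp [τ, sortedDesc_eq_comp]
    _ ≤ ∑ i, sortedDesc n c i * sortedDesc n y i := hmono.sum_mul_comp_perm_le_sum_mul

theorem exists_perm_sum_mul_comp_eq_sum_sortedDesc_mul (c x : Fin n → ℝ) :
    ∃ σ : Equiv.Perm (Fin n), ∑ i, c i * x (σ i) = ∑ i, sortedDesc n c i * sortedDesc n x i := by
  refine ⟨(sortedDescPerm c).symm.trans (sortedDescPerm x), ?_⟩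
  rw [← Equiv.sum_comp (sortedDescPerm c)]
  simp [sortedDesc_eq_comp]

theorem Majorizes.sum_sortedDesc_mul_le {x y : Fin n → ℝ} (hxy : Majorizes n x y)
    (c : Fin n → ℝ) :
    ∑ i, sortedDesc n c i * sortedDesc n y i ≤ ∑ i, sortedDesc n c i * sortedDesc n x i :=
  sum_mul_le_of_sum_filter_le (antitone_sortedDesc c) hxy.1
    (by rw [sum_sortedDesc, sum_sortedDesc, hxy.2])

theorem Majorizes.exists_perm_dotProduct_le {x y : Fin n → ℝ} (hxy : Majorizes n x y)
    (c : Fin n → ℝ) : ∃ σ : Equiv.Perm (Fin n), c ⬝ᵥ y ≤ c ⬝ᵥ (x ∘ σ) := by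
  obtain ⟨σ, hσ⟩ := exists_perm_sum_mul_comp_eq_sum_sortedDesc_mul c x
  refine ⟨σ, ?_⟩
  simp only [dotProduct, Function.comp_apply, hσ]
  exact (sum_mul_le_sum_sortedDesc_mul c y).trans (hxy.sum_sortedDesc_mul_le c)

end Sorting

theorem mem_convexHull_of_forall_exists_dotProduct_le {ι : Type*} [Fintype ι] [DecidableEq ι]
    {S : Set (ι → ℝ)} (hS : S.Finite) {y : ι → ℝ} (h : ∀ c, ∃ s ∈ S, c ⬝ᵥ y ≤ c ⬝ᵥ s) :
    y ∈ convexHull ℝ S := by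
  by_contra hy
  obtain ⟨ℓ, u, hlt, hgt⟩ := geometric_hahn_banach_closed_point (convex_convexHull ℝ S)
    (hS.isClosed_convexHull (𝕜 := ℝ)) hy
  have hℓ (v : ι → ℝ) : ℓ v = (fun i => ℓ (Pi.single i 1)) ⬝ᵥ v := by
    conv_lhs => rw [pi_eq_sum_univ' v]
    simp [dotProduct, mul_comm]
  obtain ⟨s, hs, hle⟩ := h fun i => ℓ (Pi.single i 1)
  have := hlt s (subset_convexHull ℝ S hs)
  rw [← hℓ, ← hℓ] at hle
  linarith

theorem Majorizes.mem_convexHull_range_comp_perm {n : ℕ} {x y : Fin n → ℝ}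
    (hxy : Majorizes n x y) :
    y ∈ convexHull ℝ (Set.range fun σ : Equiv.Perm (Fin n) => x ∘ σ) :=
  mem_convexHull_of_forall_exists_dotProduct_le (Set.finite_range _) fun c =>
    let ⟨σ, hσ⟩ := hxy.exists_perm_dotProduct_le c
    ⟨x ∘ σ, ⟨σ, rfl⟩, hσ⟩

theorem majorizes_norm_le_general (n : ℕ) (f : (Fin n → ℝ) → ℝ)
    (hadd : ∀ a b, f (a + b) ≤ f a + f b)
    (hsmul : ∀ (c : ℝ) (a : Fin n → ℝ), f (c • a) = |c| * f a)
    (hperm : ∀ (σ : Equiv.Perm (Fin n)) (a : Fin n → ℝ), f (a ∘ σ) = f a)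
    (x y : Fin n → ℝ) (hxy : Majorizes n x y) :
    f y ≤ f x := by
  let p : Seminorm ℝ (Fin n → ℝ) := .of f hadd hsmul
  obtain ⟨_, ⟨σ, rfl⟩, hle⟩ :=
    p.convexOn.exists_ge_of_mem_convexHull (Set.subset_univ _) hxy.mem_convexHull_range_comp_perm
  exact hle.trans_eq (hperm σ x)

theorem majorizes_norm_le (n : ℕ) (f : (Fin n → ℝ) → ℝ)
    (hadd : ∀ a b, f (a + b) ≤ f a + f b)
    (hsmul : ∀ (c : ℝ) (a : Fin n → ℝ), f (c • a) = |c| * f a)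
    (hdef : ∀ a, f a = 0 → a = 0)
    (hperm : ∀ (σ : Equiv.Perm (Fin n)) (a : Fin n → ℝ), f (a ∘ σ) = f a)
    (x y : Fin n → ℝ) (hxy : Majorizes n x y) :
    f y ≤ f x :=
  majorizes_norm_le_general n f hadd hsmul hperm x y hxy
end
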